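/- arXiv:2308.03046 — 2 statements merged into one kernel-verified Lean document; each statement's English description precedes it below -/
import Mathlib

section
/- Let (R, v) be a discrete valuation domain, where v denotes the associated additive valuation taking integer values on nonzero elements of R. For any two nonconstant polynomials f, g ∈ R[x] whose leading coefficients and constant terms are nonzero, the Newton index satisfies e(fg) = max(e(f), e(g)). -/
open Polynomial IsDiscreteValuationRing

namespace NewtonAux

section Helpers
variable {R : Type*} [CommRing R] [IsDomain R] [IsDiscreteValuationRing R]
    (v : R → ℤ)
    (hv : ∀ a : R, a ≠ 0 → 0 ≤ v a ∧
      IsDiscreteValuationRing.addVal R a = ((v a).toNat : ℕ∞))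
    (m : R[X] → ℕ → ℚ)
    (hm : ∀ (h : R[X]) (i : ℕ), m h i =
      ((v (h.coeff h.natDegree) - v (h.coeff i) : ℤ) : ℚ) /
        ((h.natDegree : ℚ) - (i : ℚ)))
    (e : R[X] → ℚ)
    (he : ∀ h : R[X], 0 < h.natDegree → h.coeff 0 ≠ 0 → h.leadingCoeff ≠ 0 →
      IsGreatest {x : ℚ | ∃ i : ℕ, i < h.natDegree ∧ h.coeff i ≠ 0 ∧ x = m h i} (e h))

include hv in
theorem nv_mul {a b : R} (ha : a ≠ 0) (hb : b ≠ 0) : v (a * b) = v a + v b := by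
  have h : addVal R (a * b) = addVal R a + addVal R b := addVal_mul
  rw [(hv a ha).2, (hv b hb).2, (hv _ (mul_ne_zero ha hb)).2] at h
  have h' : (v (a * b)).toNat = (v a).toNat + (v b).toNat := by exact_mod_cast h
  have := (hv a ha).1; have := (hv b hb).1; have := (hv _ (mul_ne_zero ha hb)).1
  omega

include hv in
theorem nv_le_sum {ι : Type*} (q : ℚ) (s : Finset ι) (F : ι → R)
    (hne : (∑ i ∈ s, F i) ≠ 0)
    (hterm : ∀ i ∈ s, F i ≠ 0 → q ≤ (v (F i) : ℚ)) :
    q ≤ (v (∑ i ∈ s, F i) : ℚ) := by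
  set c : ℤ := ⌈q⌉ with hc
  have hqc : q ≤ (c : ℚ) := Int.le_ceil q
  rcases le_or_gt c 0 with h0 | h0
  · have : (0 : ℚ) ≤ (v (∑ i ∈ s, F i) : ℚ) := by exact_mod_cast (hv _ hne).1
    calc q ≤ (c : ℚ) := hqc
      _ ≤ 0 := by exact_mod_cast h0
      _ ≤ _ := this
  · have hw : (c.toNat : ℕ∞) ≤ addVal R (∑ i ∈ s, F i) := by
      apply (addVal R).map_le_sum
      intro i hi
      by_cases hFi : F i = 0
      · rw [hFi, addVal_zero]; exact le_top
      · rw [(hv _ hFi).2]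
        have : c ≤ v (F i) := Int.ceil_le.mpr (hterm i hi hFi)
        exact_mod_cast Int.toNat_le_toNat this
    rw [(hv _ hne).2] at hw
    have hn : c.toNat ≤ (v (∑ i ∈ s, F i)).toNat := by exact_mod_cast hw
    have := (hv _ hne).1
    have : c ≤ v (∑ i ∈ s, F i) := by omega
    calc q ≤ (c : ℚ) := hqc
      _ ≤ _ := by exact_mod_cast this

theorem addVal_neg' (x : R) : addVal R (-x) = addVal R x := by
  have h1 : addVal R ((-1 : R) * (-1)) = addVal R (-1) + addVal R (-1) := addVal_mul
  rw [neg_one_mul, neg_neg, addVal_one] at h1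
  have h2 : addVal R (-1 : R) = 0 := (add_eq_zero.mp h1.symm).1
  calc addVal R (-x) = addVal R ((-1) * x) := by rw [neg_one_mul]
    _ = addVal R (-1 : R) + addVal R x := addVal_mul
    _ = addVal R x := by rw [h2, zero_add]

include hv in
theorem nv_dominant {ι : Type*} (s : Finset ι) (F : ι → R) (j : ι) (hj : j ∈ s)
    (hFj : F j ≠ 0)
    (hlt : ∀ i ∈ s, i ≠ j → F i ≠ 0 → v (F j) < v (F i)) :
    (∑ i ∈ s, F i) ≠ 0 ∧ v (∑ i ∈ s, F i) ≤ v (F j) := by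
  classical
  set t : ℕ := (v (F j)).toNat with ht
  have hwj : addVal R (F j) = (t : ℕ∞) := (hv _ hFj).2
  have hvj0 := (hv _ hFj).1
  have hrest : (t : ℕ∞) < addVal R (∑ i ∈ s.erase j, F i) := by
    apply (addVal R).map_lt_sum (by simp : (t : ℕ∞) ≠ ⊤)
    intro i hi
    by_cases hFi : F i = 0
    · rw [hFi, addVal_zero]; exact_mod_cast WithTop.coe_lt_top t
    · rw [(hv _ hFi).2]
      have h1 : v (F j) < v (F i) := hlt i (Finset.mem_of_mem_erase hi) (Finset.ne_of_mem_erase hi) hFi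
      have : t < (v (F i)).toNat := by omega
      exact_mod_cast this
  have hsum_eq : F j + ∑ i ∈ s.erase j, F i = ∑ i ∈ s, F i := Finset.add_sum_erase s F hj
  have hFj_eq : F j = (∑ i ∈ s, F i) + (-(∑ i ∈ s.erase j, F i)) := by
    rw [← hsum_eq]; ring
  have hmin : min (addVal R (∑ i ∈ s, F i)) (addVal R (-(∑ i ∈ s.erase j, F i)))
      ≤ addVal R (F j) := by
    conv_rhs => rw [hFj_eq]
    exact (addVal R).map_add _ _
  rw [addVal_neg', hwj] at hmin
  have hle : addVal R (∑ i ∈ s, F i) ≤ (t : ℕ∞) := by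
    rcases min_le_iff.mp hmin with h | h
    · exact h
    · exact absurd (lt_of_lt_of_le hrest h) (by simp)
  have hne : (∑ i ∈ s, F i) ≠ 0 := by
    intro h0
    rw [h0, addVal_zero] at hle
    exact absurd (top_le_iff.mp hle) (by simp)
  refine ⟨hne, ?_⟩
  rw [(hv _ hne).2] at hle
  have : (v (∑ i ∈ s, F i)).toNat ≤ t := by exact_mod_cast hle
  have := (hv _ hne).1
  omega

theorem slope_bound (m : R[X] → ℕ → ℚ)
    (hm : ∀ (h : R[X]) (i : ℕ), m h i =
      ((v (h.coeff h.natDegree) - v (h.coeff i) : ℤ) : ℚ) /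
        ((h.natDegree : ℚ) - (i : ℚ)))
    (h : R[X]) (B : ℚ)
    (hub : ∀ i, i < h.natDegree → h.coeff i ≠ 0 → m h i ≤ B) :
    ∀ i, i ≤ h.natDegree → h.coeff i ≠ 0 →
      (v (h.coeff h.natDegree) : ℚ) - (v (h.coeff i) : ℚ) ≤ B * ((h.natDegree : ℚ) - i) := by
  intro i hi hne
  rcases eq_or_lt_of_le hi with rfl | hlt
  · simp
  · have hd : (0 : ℚ) < (h.natDegree : ℚ) - i := by
      have : (i : ℚ) < (h.natDegree : ℚ) := by exact_mod_cast hlt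
      linarith
    have hB := hub i hlt hne
    rw [hm, div_le_iff₀ hd] at hB
    push_cast at hB ⊢
    linarith

end Helpers

section Main
variable {R : Type*} [CommRing R] [IsDomain R] [IsDiscreteValuationRing R]
    (v : R → ℤ)
    (hv : ∀ a : R, a ≠ 0 → 0 ≤ v a ∧
      IsDiscreteValuationRing.addVal R a = ((v a).toNat : ℕ∞))
    (m : R[X] → ℕ → ℚ)
    (hm : ∀ (h : R[X]) (i : ℕ), m h i =
      ((v (h.coeff h.natDegree) - v (h.coeff i) : ℤ) : ℚ) /
        ((h.natDegree : ℚ) - (i : ℚ)))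
    (e : R[X] → ℚ)
    (he : ∀ h : R[X], 0 < h.natDegree → h.coeff 0 ≠ 0 → h.leadingCoeff ≠ 0 →
      IsGreatest {x : ℚ | ∃ i : ℕ, i < h.natDegree ∧ h.coeff i ≠ 0 ∧ x = m h i} (e h))

include hv hm he in
theorem aux_le (f g : R[X]) (hf : 0 < f.natDegree) (hg : 0 < g.natDegree)
    (hf0 : f.coeff 0 ≠ 0) (hg0 : g.coeff 0 ≠ 0)
    (hfl : f.leadingCoeff ≠ 0) (hgl : g.leadingCoeff ≠ 0)
    (hgf : e g ≤ e f) : e f ≤ e (f * g) := by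
  classical
  set n := f.natDegree with hn
  set p := g.natDegree with hp
  have hfne : f ≠ 0 := fun h => hf0 (by simp [h])
  have hgne : g ≠ 0 := fun h => hg0 (by simp [h])
  have hN : (f * g).natDegree = n + p := natDegree_mul hfne hgne
  have hNpos : 0 < (f * g).natDegree := by omega
  have hc0 : (f * g).coeff 0 ≠ 0 := by
    rw [mul_coeff_zero]; exact mul_ne_zero hf0 hg0
  have hl : (f * g).leadingCoeff ≠ 0 := by
    rw [leadingCoeff_mul]; exact mul_ne_zero hfl hgl
  have hfn : f.coeff n ≠ 0 := by rwa [coeff_natDegree]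
  have hgp : g.coeff p ≠ 0 := by rwa [coeff_natDegree]
  have hcN : (f * g).coeff ((f * g).natDegree) = f.coeff n * g.coeff p := by
    rw [hN, hn, hp, coeff_natDegree, coeff_natDegree]
    exact coeff_mul_degree_add_degree f g
  have vN : v ((f * g).coeff ((f * g).natDegree)) = v (f.coeff n) + v (g.coeff p) := by
    rw [hcN]; exact nv_mul v hv hfn hgp
  set μ := e f with hμ
  -- slope bounds
  have hubf : ∀ i, i < n → f.coeff i ≠ 0 → m f i ≤ μ := fun i hi hne =>
    (he f hf hf0 hfl).2 ⟨i, hi, hne, rfl⟩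
  have hubg : ∀ j, j < p → g.coeff j ≠ 0 → m g j ≤ μ := fun j hj hne =>
    le_trans ((he g hg hg0 hgl).2 ⟨j, hj, hne, rfl⟩) hgf
  have boundf := slope_bound v m hm f μ hubf
  have boundg := slope_bound v m hm g μ hubg
  -- the index where e f is attained
  obtain ⟨i1, hi1, hi1ne, hi1eq⟩ := (he f hf hf0 hfl).1
  have hdi1 : (0 : ℚ) < (n : ℚ) - i1 := by
    have : (i1 : ℚ) < (n : ℚ) := by exact_mod_cast hi1
    linarith
  have hPi1 : f.coeff i1 ≠ 0 ∧
      μ * ((n : ℚ) - i1) ≤ (v (f.coeff n) : ℚ) - v (f.coeff i1) := by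
    refine ⟨hi1ne, ?_⟩
    rw [hm] at hi1eq
    rw [hμ, hi1eq, div_mul_cancel₀ _ (ne_of_gt hdi1)]
    push_cast
    linarith
  set P : ℕ → Prop := fun i => f.coeff i ≠ 0 ∧
      μ * ((n : ℚ) - i) ≤ (v (f.coeff n) : ℚ) - v (f.coeff i) with hP
  have hPex : ∃ i, P i := ⟨i1, hPi1⟩
  set i0 := Nat.find hPex with hi0def
  have hPi0 : P i0 := Nat.find_spec hPex
  have hi0min : ∀ i, i < i0 → ¬ P i := fun i hi => Nat.find_min hPex hi
  have hi0lt : i0 < n := lt_of_le_of_lt (Nat.find_min' hPex hPi1) hi1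
  have Ef : (v (f.coeff n) : ℚ) - v (f.coeff i0) = μ * ((n : ℚ) - i0) :=
    le_antisymm (boundf i0 (le_of_lt hi0lt) hPi0.1) hPi0.2
  -- the index for g
  have hQp : g.coeff p ≠ 0 ∧
      μ * ((p : ℚ) - p) ≤ (v (g.coeff p) : ℚ) - v (g.coeff p) := ⟨hgp, by simp⟩
  set Q : ℕ → Prop := fun j => g.coeff j ≠ 0 ∧
      μ * ((p : ℚ) - j) ≤ (v (g.coeff p) : ℚ) - v (g.coeff j) with hQ
  have hQex : ∃ j, Q j := ⟨p, hQp⟩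
  set j0 := Nat.find hQex with hj0def
  have hQj0 : Q j0 := Nat.find_spec hQex
  have hj0min : ∀ j, j < j0 → ¬ Q j := fun j hj => Nat.find_min hQex hj
  have hj0le : j0 ≤ p := Nat.find_min' hQex hQp
  have Eg : (v (g.coeff p) : ℚ) - v (g.coeff j0) = μ * ((p : ℚ) - j0) :=
    le_antisymm (boundg j0 hj0le hQj0.1) hQj0.2
  -- the product index
  set k := i0 + j0 with hk
  clear_value k
  have hkN : k < n + p := by omega
  set F : ℕ × ℕ → R := fun x => f.coeff x.1 * g.coeff x.2 with hF
  have hmain : F (i0, j0) ≠ 0 := mul_ne_zero hPi0.1 hQj0.1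
  have hmem : (i0, j0) ∈ Finset.HasAntidiagonal.antidiagonal k := Finset.HasAntidiagonal.mem_antidiagonal.mpr (by omega)
  have hdom := nv_dominant v hv (Finset.HasAntidiagonal.antidiagonal k) F (i0, j0) hmem hmain ?_
  · -- use domination
    have hsum : (f * g).coeff k = ∑ x ∈ Finset.HasAntidiagonal.antidiagonal k, F x := coeff_mul f g k
    rw [← hsum] at hdom
    obtain ⟨hckne, hckle⟩ := hdom
    -- the value of the main term
    have hvmain : (v (F (i0, j0)) : ℚ) =
        (v (f.coeff n) : ℚ) + v (g.coeff p) - μ * ((n : ℚ) + p - k) := by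
      have := nv_mul v hv hPi0.1 hQj0.1
      have hkc : (k : ℚ) = (i0 : ℚ) + j0 := by exact_mod_cast hk
      have hring : μ * ((n : ℚ) - i0) + μ * ((p : ℚ) - j0) = μ * ((n : ℚ) + p - k) := by
        linear_combination μ * hkc
      push_cast [hF, this]
      linarith [Ef, Eg, hring]
    -- conclude the slope at k is ≥ μ
    have hkN' : k < (f * g).natDegree := by omega
    have hdk : (0 : ℚ) < ((f * g).natDegree : ℚ) - k := by
      have : (k : ℚ) < ((f * g).natDegree : ℚ) := by exact_mod_cast hkN'
      linarith
    have hslope : μ ≤ m (f * g) k := by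
      rw [hm, le_div_iff₀ hdk]
      have h1 : (v ((f * g).coeff k) : ℚ) ≤ (v (F (i0, j0)) : ℚ) := by exact_mod_cast hckle
      have h2 : ((f * g).natDegree : ℚ) = (n : ℚ) + p := by exact_mod_cast hN
      push_cast [vN]
      rw [h2] at hdk ⊢
      linarith [hvmain, h1]
    exact le_trans hslope ((he (f * g) hNpos hc0 hl).2 ⟨k, hkN', hckne, rfl⟩)
  · -- strict domination of cross terms
    rintro ⟨i, j⟩ hijmem hne0 hFne
    have hij : i + j = k := Finset.HasAntidiagonal.mem_antidiagonal.mp hijmem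
    have hai : f.coeff i ≠ 0 := left_ne_zero_of_mul hFne
    have hbj : g.coeff j ≠ 0 := right_ne_zero_of_mul hFne
    have hin : i ≤ n := le_natDegree_of_ne_zero hai
    have hjp : j ≤ p := le_natDegree_of_ne_zero hbj
    have hii0 : i ≠ i0 := by
      intro hEq
      apply hne0
      have hjj : j = j0 := by omega
      rw [hEq, hjj]
    have hQval : (v (F (i0, j0)) : ℚ) < (v (F (i, j)) : ℚ) → v (F (i0, j0)) < v (F (i, j)) :=
      fun h => by exact_mod_cast h
    apply hQval
    have hm1 : (v (F (i0, j0)) : ℚ) = (v (f.coeff i0) : ℚ) + v (g.coeff j0) := by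
      rw [hF]; push_cast [nv_mul v hv hPi0.1 hQj0.1]; ring
    have hm2 : (v (F (i, j)) : ℚ) = (v (f.coeff i) : ℚ) + v (g.coeff j) := by
      rw [hF]; push_cast [nv_mul v hv hai hbj]; ring
    rw [hm1, hm2]
    have hkc : (i : ℚ) + j = (i0 : ℚ) + j0 := by
      have : i + j = i0 + j0 := by omega
      exact_mod_cast this
    rcases lt_or_gt_of_ne hii0 with hlt | hgt
    · -- i < i0 : strictness from minimality of i0
      have hnP := hi0min i hlt
      have hstrict : (v (f.coeff n) : ℚ) - v (f.coeff i) < μ * ((n : ℚ) - i) := by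
        by_contra hcon
        push_neg at hcon
        exact hnP ⟨hai, hcon⟩
      have hgbound : (v (g.coeff p) : ℚ) - v (g.coeff j) ≤ μ * ((p : ℚ) - j) :=
        boundg j hjp hbj
      have hring : μ * ((n : ℚ) - i) + μ * ((p : ℚ) - j)
          = μ * ((n : ℚ) - i0) + μ * ((p : ℚ) - j0) := by
        linear_combination (-μ) * hkc
      linarith [Ef, Eg]
    · -- i > i0, so j < j0 : strictness from minimality of j0
      have hjlt : j < j0 := by omega
      have hnQ := hj0min j hjlt
      have hstrict : (v (g.coeff p) : ℚ) - v (g.coeff j) < μ * ((p : ℚ) - j) := by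
        by_contra hcon
        push_neg at hcon
        exact hnQ ⟨hbj, hcon⟩
      have hfbound : (v (f.coeff n) : ℚ) - v (f.coeff i) ≤ μ * ((n : ℚ) - i) :=
        boundf i hin hai
      have hring : μ * ((n : ℚ) - i) + μ * ((p : ℚ) - j)
          = μ * ((n : ℚ) - i0) + μ * ((p : ℚ) - j0) := by
        linear_combination (-μ) * hkc
      linarith [Ef, Eg]


include hv hm he in
theorem aux_ub (f g : R[X]) (hf : 0 < f.natDegree) (hg : 0 < g.natDegree)
    (hf0 : f.coeff 0 ≠ 0) (hg0 : g.coeff 0 ≠ 0)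
    (hfl : f.leadingCoeff ≠ 0) (hgl : g.leadingCoeff ≠ 0) :
    e (f * g) ≤ max (e f) (e g) := by
  classical
  set n := f.natDegree with hn
  set p := g.natDegree with hp
  have hfne : f ≠ 0 := fun h => hf0 (by simp [h])
  have hgne : g ≠ 0 := fun h => hg0 (by simp [h])
  have hN : (f * g).natDegree = n + p := natDegree_mul hfne hgne
  have hNpos : 0 < (f * g).natDegree := by omega
  have hc0 : (f * g).coeff 0 ≠ 0 := by
    rw [mul_coeff_zero]; exact mul_ne_zero hf0 hg0
  have hl : (f * g).leadingCoeff ≠ 0 := by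
    rw [leadingCoeff_mul]; exact mul_ne_zero hfl hgl
  have hfn : f.coeff n ≠ 0 := by rwa [coeff_natDegree]
  have hgp : g.coeff p ≠ 0 := by rwa [coeff_natDegree]
  have hcN : (f * g).coeff ((f * g).natDegree) = f.coeff n * g.coeff p := by
    rw [hN, hn, hp, coeff_natDegree, coeff_natDegree]
    exact coeff_mul_degree_add_degree f g
  have vN : v ((f * g).coeff ((f * g).natDegree)) = v (f.coeff n) + v (g.coeff p) := by
    rw [hcN]; exact nv_mul v hv hfn hgp
  set μ := max (e f) (e g) with hμ
  have hubf : ∀ i, i < n → f.coeff i ≠ 0 → m f i ≤ μ := fun i hi hne =>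
    le_trans ((he f hf hf0 hfl).2 ⟨i, hi, hne, rfl⟩) (le_max_left _ _)
  have hubg : ∀ j, j < p → g.coeff j ≠ 0 → m g j ≤ μ := fun j hj hne =>
    le_trans ((he g hg hg0 hgl).2 ⟨j, hj, hne, rfl⟩) (le_max_right _ _)
  have boundf := slope_bound v m hm f μ hubf
  have boundg := slope_bound v m hm g μ hubg
  obtain ⟨k, hk, hckne, hEeq⟩ := (he (f * g) hNpos hc0 hl).1
  rw [hEeq, hm]
  have hdk : (0 : ℚ) < ((f * g).natDegree : ℚ) - k := by
    have : (k : ℚ) < ((f * g).natDegree : ℚ) := by exact_mod_cast hk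
    linarith
  rw [div_le_iff₀ hdk]
  have hsumne : (∑ x ∈ Finset.HasAntidiagonal.antidiagonal k, f.coeff x.1 * g.coeff x.2) ≠ 0 := by
    rw [← coeff_mul]; exact hckne
  have key : (v (f.coeff n) : ℚ) + v (g.coeff p) - μ * ((n : ℚ) + p - k)
      ≤ (v ((f * g).coeff k) : ℚ) := by
    rw [coeff_mul]
    apply nv_le_sum v hv _ _ _ hsumne
    rintro ⟨i, j⟩ hijmem hFne
    have hij : i + j = k := Finset.HasAntidiagonal.mem_antidiagonal.mp hijmem
    have hai : f.coeff i ≠ 0 := left_ne_zero_of_mul hFne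
    have hbj : g.coeff j ≠ 0 := right_ne_zero_of_mul hFne
    have hin : i ≤ n := le_natDegree_of_ne_zero hai
    have hjp : j ≤ p := le_natDegree_of_ne_zero hbj
    have hmulv : (v (f.coeff i * g.coeff j) : ℚ) = (v (f.coeff i) : ℚ) + v (g.coeff j) := by
      push_cast [nv_mul v hv hai hbj]; ring
    rw [hmulv]
    have hkc : (i : ℚ) + j = (k : ℚ) := by exact_mod_cast hij
    have hring : μ * ((n : ℚ) - i) + μ * ((p : ℚ) - j) = μ * ((n : ℚ) + p - k) := by
      linear_combination (-μ) * hkc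
    linarith [boundf i hin hai, boundg j hjp hbj]
  have h2 : ((f * g).natDegree : ℚ) = (n : ℚ) + p := by exact_mod_cast hN
  push_cast [vN]
  rw [h2] at hdk ⊢
  linarith [key]


end Main

end NewtonAux

open Polynomial

/-- **Multiplicativity of the Newton index.** Let `(R, v)` be a discrete valuation domain
with integer-valued additive valuation `v`.  For a polynomial
`h = a₀ + a₁x + ⋯ + aₙxⁿ ∈ R[x]` of degree `n` with `aₙ ≠ 0`, the slope
`mᵢ(h) = (v(aₙ) - v(aᵢ))/(n - i)` is defined whenever `i < n` and `aᵢ ≠ 0`, and the Newton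
index `e(h)` is the greatest of these slopes.  Then for any two nonconstant polynomials
`f, g ∈ R[x]` whose leading coefficients and constant terms are nonzero,
`e(fg) = max(e(f), e(g))`. -/
theorem newton_index_of_mul
    {R : Type*} [CommRing R] [IsDomain R] [IsDiscreteValuationRing R]
    (v : R → ℤ)
    (hv : ∀ a : R, a ≠ 0 → 0 ≤ v a ∧
      IsDiscreteValuationRing.addVal R a = ((v a).toNat : ℕ∞))
    (m : R[X] → ℕ → ℚ)
    (hm : ∀ (h : R[X]) (i : ℕ), m h i =
      ((v (h.coeff h.natDegree) - v (h.coeff i) : ℤ) : ℚ) /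
        ((h.natDegree : ℚ) - (i : ℚ)))
    (e : R[X] → ℚ)
    (he : ∀ h : R[X], 0 < h.natDegree → h.coeff 0 ≠ 0 → h.leadingCoeff ≠ 0 →
      IsGreatest {x : ℚ | ∃ i : ℕ, i < h.natDegree ∧ h.coeff i ≠ 0 ∧ x = m h i} (e h))
    (f g : R[X]) (hf : 0 < f.natDegree) (hg : 0 < g.natDegree)
    (hf0 : f.coeff 0 ≠ 0) (hg0 : g.coeff 0 ≠ 0)
    (hfl : f.leadingCoeff ≠ 0) (hgl : g.leadingCoeff ≠ 0) :
    e (f * g) = max (e f) (e g) := by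
  rcases le_total (e g) (e f) with h | h
  · rw [max_eq_left h]
    exact le_antisymm
      (by simpa [max_eq_left h] using
        NewtonAux.aux_ub v hv m hm e he f g hf hg hf0 hg0 hfl hgl)
      (NewtonAux.aux_le v hv m hm e he f g hf hg hf0 hg0 hfl hgl h)
  · rw [max_eq_right h, mul_comm f g]
    exact le_antisymm
      (by simpa [max_eq_left h] using
        NewtonAux.aux_ub v hv m hm e he g f hg hf hg0 hf0 hgl hfl)
      (NewtonAux.aux_le v hv m hm e he g f hg hf hg0 hf0 hgl hfl h)
end

section
/- Let (R, v) be a discrete valuation domain, where v denotes the associated additive valuation taking integer values on nonzero elements of R. Let f = a_0 + a_1 x + ... + a_n x^n ∈ R[x] be a polynomial of degree n ≥ 2 with a_0 a_n ≠ 0, and suppose f = f_1 f_2 with f_1, f_2 ∈ R[x] nonconstant, where f_1 has degree n_1, leading coefficient a_{1,n_1}, and constant term a_{1,0} ≠ 0. Suppose there exists s ∈ {1, ..., n-1} with a_s ≠ 0 such that m_i(f) < m_s(f) for all i ∈ {0, 1, ..., n-1} with i ≠ s and a_i ≠ 0. Then, writing c_s = v(a_n) − v(a_s) and c_{10} = v(a_{1,n_1})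 − v(a_{1,0}), one has c_s · n_1 − (n − s) · c_{10} ≥ 0. -/
open Polynomial IsDiscreteValuationRing

section AuxLemmas

variable {R : Type*} [CommRing R] [IsDomain R] [IsDiscreteValuationRing R]

lemma my_addVal_neg (y : R) : addVal R (-y) = addVal R y := by
  have h1 : addVal R ((-1 : R) * (-1)) = addVal R (-1) + addVal R (-1) := addVal_mul
  have h2 : ((-1 : R) * (-1)) = 1 := by ring
  rw [h2, addVal_one] at h1
  have h0 : addVal R (-1 : R) = 0 := by
    have h4 := self_le_add_right (addVal R (-1 : R)) (addVal R (-1 : R))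
    rw [← h1] at h4
    exact le_antisymm h4 zero_le
  have h3 : addVal R ((-1 : R) * y) = addVal R (-1) + addVal R y := addVal_mul
  rw [h0, zero_add] at h3
  simpa using h3

lemma my_addVal_add_eq {x y : R} (h : addVal R x < addVal R y) :
    addVal R (x + y) = addVal R x := by
  have h1 : min (addVal R x) (addVal R y) ≤ addVal R (x + y) := (addVal R).map_add x y
  rw [min_eq_left h.le] at h1
  have h2 : min (addVal R (x + y)) (addVal R (-y)) ≤ addVal R (x + y + -y) :=
    (addVal R).map_add _ _
  have h3 : x + y + -y = x := by ring
  rw [h3, my_addVal_neg] at h2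
  rcases min_le_iff.mp h2 with h4 | h4
  · exact le_antisymm h4 h1
  · exact absurd (h4.trans_lt h) (lt_irrefl _)

end AuxLemmas

set_option maxHeartbeats 1000000

/-- **Key inequality in the proofs.** Let `(R, v)` be a discrete valuation domain with
integer-valued additive valuation `v`, and let `f = a₀ + a₁x + ⋯ + aₙxⁿ ∈ R[x]` with
`n = deg f ≥ 2` and `a₀aₙ ≠ 0`.  Suppose `f = f₁f₂` with `f₁, f₂` nonconstant, where `f₁`
has degree `n₁`, leading coefficient `a_{1,n₁}` and nonzero constant term `a_{1,0}`.
If there is `s ∈ {1, …, n-1}` with `aₛ ≠ 0` and `mᵢ(f) < mₛ(f)` for all `i ≠ s` with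
`aᵢ ≠ 0`, then, with `cₛ = v(aₙ) − v(aₛ)` and `c₁₀ = v(a_{1,n₁}) − v(a_{1,0})`, one has
`cₛ·n₁ − (n − s)·c₁₀ ≥ 0`. -/
theorem key_inequality
    {R : Type*} [CommRing R] [IsDomain R] [IsDiscreteValuationRing R]
    (v : R → ℤ)
    (hv : ∀ a : R, a ≠ 0 → 0 ≤ v a ∧
      IsDiscreteValuationRing.addVal R a = ((v a).toNat : ℕ∞))
    (f f₁ f₂ : R[X]) (hf : f = f₁ * f₂)
    (hf₁ : 0 < f₁.natDegree) (hf₂ : 0 < f₂.natDegree)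
    (n : ℕ) (hdeg : f.natDegree = n) (hn : 2 ≤ n)
    (ha0 : f.coeff 0 ≠ 0) (han : f.coeff n ≠ 0)
    (n₁ : ℕ) (hdeg₁ : f₁.natDegree = n₁) (h₁₀ : f₁.coeff 0 ≠ 0)
    (m : ℕ → ℚ)
    (hm : ∀ i : ℕ, m i = ((v (f.coeff n) - v (f.coeff i) : ℤ) : ℚ) / ((n : ℚ) - (i : ℚ)))
    (s : ℕ) (hs1 : 1 ≤ s) (hs : s < n) (has : f.coeff s ≠ 0)
    (hslope : ∀ i : ℕ, i < n → i ≠ s → f.coeff i ≠ 0 → m i < m s) :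
    0 ≤ (v (f.coeff n) - v (f.coeff s)) * (n₁ : ℤ) -
        ((n : ℤ) - (s : ℤ)) * (v f₁.leadingCoeff - v (f₁.coeff 0)) := by
  classical
  by_contra hcon
  push_neg at hcon
  -- basic facts
  have hf₁0 : f₁ ≠ 0 := fun h => by simp [h] at hf₁
  have hf₂0 : f₂ ≠ 0 := fun h => by simp [h] at hf₂
  set n₂ := f₂.natDegree with hn₂
  have hnsum : n = n₁ + n₂ := by
    rw [← hdeg, hf, natDegree_mul hf₁0 hf₂0, hdeg₁]
  have hb : f₁.coeff n₁ ≠ 0 := by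
    rw [← hdeg₁]; exact mt leadingCoeff_eq_zero.mp hf₁0
  have hc : f₂.coeff n₂ ≠ 0 := mt leadingCoeff_eq_zero.mp hf₂0
  have hlead₁ : f₁.leadingCoeff = f₁.coeff n₁ := by rw [leadingCoeff, hdeg₁]
  have hlead : f.coeff n = f₁.coeff n₁ * f₂.coeff n₂ := by
    rw [hf, hnsum, ← hdeg₁]
    exact coeff_mul_degree_add_degree f₁ f₂
  have hns : (0 : ℤ) < (n : ℤ) - (s : ℤ) := by
    have : (s : ℤ) < (n : ℤ) := by exact_mod_cast hs
    linarith
  -- translation lemmas between `v` and `addVal`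
  have hvmul : ∀ a b : R, a ≠ 0 → b ≠ 0 → v (a * b) = v a + v b := by
    intro a b ha hb0
    have hab : a * b ≠ 0 := mul_ne_zero ha hb0
    have h1 : addVal R (a * b) = addVal R a + addVal R b := addVal_mul
    rw [(hv _ hab).2, (hv _ ha).2, (hv _ hb0).2] at h1
    have h2 : (v (a * b)).toNat = (v a).toNat + (v b).toNat := by exact_mod_cast h1
    have h3 := (hv _ hab).1
    have h4 := (hv _ ha).1
    have h5 := (hv _ hb0).1
    omega
  have hvlt : ∀ a b : R, a ≠ 0 → b ≠ 0 → v a < v b → addVal R a < addVal R b := by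
    intro a b ha hb0 hlt
    rw [(hv _ ha).2, (hv _ hb0).2]
    have h4 := (hv _ ha).1
    have h2 : (v a).toNat < (v b).toNat := by omega
    exact_mod_cast h2
  have hveq : ∀ a b : R, a ≠ 0 → b ≠ 0 → addVal R a = addVal R b → v a = v b := by
    intro a b ha hb0 heq
    rw [(hv _ ha).2, (hv _ hb0).2] at heq
    have h2 : (v a).toNat = (v b).toNat := by exact_mod_cast heq
    have h4 := (hv _ ha).1
    have h5 := (hv _ hb0).1
    omega
  set cs : ℤ := v (f.coeff n) - v (f.coeff s) with hcs
  set V₁ : ℕ → ℤ := fun i => ((n : ℤ) - (s : ℤ)) * v (f₁.coeff i) - cs * i with hV₁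
  set V₂ : ℕ → ℤ := fun i => ((n : ℤ) - (s : ℤ)) * v (f₂.coeff i) - cs * i with hV₂
  -- least-index minimizers
  have hex₁ : ∃ k, k ∈ f₁.support ∧ ∀ i ∈ f₁.support, V₁ k ≤ V₁ i := by
    obtain ⟨a, ha, hmina⟩ :=
      f₁.support.exists_min_image V₁ (nonempty_support_iff.mpr hf₁0)
    exact ⟨a, ha, hmina⟩
  have hex₂ : ∃ k, k ∈ f₂.support ∧ ∀ i ∈ f₂.support, V₂ k ≤ V₂ i := by
    obtain ⟨a, ha, hmina⟩ :=
      f₂.support.exists_min_image V₂ (nonempty_support_iff.mpr hf₂0)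
    exact ⟨a, ha, hmina⟩
  set j₁ := Nat.find hex₁ with hj₁def
  set j₂ := Nat.find hex₂ with hj₂def
  obtain ⟨hj₁mem, hj₁min⟩ := Nat.find_spec hex₁
  obtain ⟨hj₂mem, hj₂min⟩ := Nat.find_spec hex₂
  rw [← hj₁def] at hj₁mem hj₁min
  rw [← hj₂def] at hj₂mem hj₂min
  have hj₁lt : ∀ i ∈ f₁.support, i < j₁ → V₁ j₁ < V₁ i := by
    intro i hi hilt
    by_contra hle
    push_neg at hle
    exact absurd ⟨hi, fun k hk => hle.trans (hj₁min k hk)⟩ (Nat.find_min hex₁ hilt)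
  have hj₂lt : ∀ i ∈ f₂.support, i < j₂ → V₂ j₂ < V₂ i := by
    intro i hi hilt
    by_contra hle
    push_neg at hle
    exact absurd ⟨hi, fun k hk => hle.trans (hj₂min k hk)⟩ (Nat.find_min hex₂ hilt)
  have hbj : f₁.coeff j₁ ≠ 0 := mem_support_iff.mp hj₁mem
  have hcj : f₂.coeff j₂ ≠ 0 := mem_support_iff.mp hj₂mem
  have hj₁le : j₁ ≤ n₁ := hdeg₁ ▸ le_natDegree_of_ne_zero hbj
  have hj₂le : j₂ ≤ n₂ := le_natDegree_of_ne_zero hcj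
  -- from the contradiction hypothesis, V₁ 0 < V₁ n₁, hence j₁ < n₁
  have hV₁0n : V₁ 0 < V₁ n₁ := by
    rw [hlead₁] at hcon
    simp only [hV₁]
    push_cast
    linarith
  have hj₁ltn : j₁ < n₁ := by
    have h0mem : (0 : ℕ) ∈ f₁.support := mem_support_iff.mpr h₁₀
    have hlt := (hj₁min 0 h0mem).trans_lt hV₁0n
    rcases lt_or_eq_of_le hj₁le with h | h
    · exact h
    · rw [h] at hlt; exact absurd hlt (lt_irrefl _)
  set j := j₁ + j₂ with hjdef
  have hjn : j < n := by omega
  -- the key coefficient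
  set T : R := f₁.coeff j₁ * f₂.coeff j₂ with hT
  have hTne : T ≠ 0 := mul_ne_zero hbj hcj
  have hmemad : (j₁, j₂) ∈ Finset.HasAntidiagonal.antidiagonal j := by
    rw [Finset.HasAntidiagonal.mem_antidiagonal]
  have hstrict : ∀ p ∈ (Finset.HasAntidiagonal.antidiagonal j).erase (j₁, j₂),
      addVal R T < addVal R (f₁.coeff p.1 * f₂.coeff p.2) := by
    intro p hp
    obtain ⟨hpne, hpmem⟩ := Finset.mem_erase.mp hp
    rw [Finset.HasAntidiagonal.mem_antidiagonal] at hpmem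
    by_cases h0 : f₁.coeff p.1 * f₂.coeff p.2 = 0
    · rw [h0, addVal_zero, (hv _ hTne).2]
      exact lt_of_le_of_ne le_top (by simp)
    · have h1 : f₁.coeff p.1 ≠ 0 := left_ne_zero_of_mul h0
      have h2 : f₂.coeff p.2 ≠ 0 := right_ne_zero_of_mul h0
      apply hvlt _ _ hTne h0
      rw [hT, hvmul _ _ hbj hcj, hvmul _ _ h1 h2]
      have hp1 : p.1 ∈ f₁.support := mem_support_iff.mpr h1
      have hp2 : p.2 ∈ f₂.support := mem_support_iff.mpr h2
      have key : V₁ j₁ + V₂ j₂ < V₁ p.1 + V₂ p.2 := by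
        rcases lt_trichotomy p.1 j₁ with h | h | h
        · have s1 := hj₁lt p.1 hp1 h
          have s2 := hj₂min p.2 hp2
          linarith
        · exfalso
          apply hpne
          have : p.2 = j₂ := by omega
          exact Prod.ext h this
        · have hlt2 : p.2 < j₂ := by omega
          have s1 := hj₁min p.1 hp1
          have s2 := hj₂lt p.2 hp2 hlt2
          linarith
      simp only [hV₁, hV₂] at key
      have hsum : (p.1 : ℤ) + (p.2 : ℤ) = (j₁ : ℤ) + (j₂ : ℤ) := by exact_mod_cast hpmem
      have hcs2 : cs * ((p.1 : ℤ) + (p.2 : ℤ)) = cs * ((j₁ : ℤ) + (j₂ : ℤ)) := by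
        rw [hsum]
      have key2 : ((n : ℤ) - (s : ℤ)) * (v (f₁.coeff j₁) + v (f₂.coeff j₂)) <
          ((n : ℤ) - (s : ℤ)) * (v (f₁.coeff p.1) + v (f₂.coeff p.2)) := by
        linarith [key, hcs2]
      exact lt_of_mul_lt_mul_left key2 hns.le
  have hcoeffj : f.coeff j = T + ∑ p ∈ (Finset.HasAntidiagonal.antidiagonal j).erase (j₁, j₂),
      f₁.coeff p.1 * f₂.coeff p.2 := by
    rw [hf, coeff_mul, ← Finset.add_sum_erase _ _ hmemad]
  have hTtop : addVal R T ≠ ⊤ := by rw [(hv _ hTne).2]; simp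
  have hvalsum : addVal R (f.coeff j) = addVal R T := by
    rw [hcoeffj]
    apply my_addVal_add_eq
    exact (addVal R).map_lt_sum hTtop hstrict
  have hfjne : f.coeff j ≠ 0 := by
    intro h0
    rw [h0, addVal_zero] at hvalsum
    exact hTtop hvalsum.symm
  have hvfj : v (f.coeff j) = v (f₁.coeff j₁) + v (f₂.coeff j₂) := by
    rw [hveq _ _ hfjne hTne hvalsum, hT, hvmul _ _ hbj hcj]
  have hvan : v (f.coeff n) = v (f₁.coeff n₁) + v (f₂.coeff n₂) := by
    rw [hlead, hvmul _ _ hb hc]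
  -- main integer inequality
  have key1 : V₁ j₁ < V₁ n₁ := (hj₁min 0 (mem_support_iff.mpr h₁₀)).trans_lt hV₁0n
  have key2 : V₂ j₂ ≤ V₂ n₂ := hj₂min n₂ (mem_support_iff.mpr hc)
  have main : cs * ((n : ℤ) - (j : ℤ)) <
      ((n : ℤ) - (s : ℤ)) * (v (f.coeff n) - v (f.coeff j)) := by
    simp only [hV₁, hV₂] at key1 key2
    rw [hvan, hvfj]
    have hcastn : (n : ℤ) = (n₁ : ℤ) + (n₂ : ℤ) := by exact_mod_cast hnsum
    have hcastj : (j : ℤ) = (j₁ : ℤ) + (j₂ : ℤ) := by exact_mod_cast hjdef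
    have e1 : cs * ((n : ℤ) - (j : ℤ)) =
        cs * (n₁ : ℤ) + cs * (n₂ : ℤ) - cs * (j₁ : ℤ) - cs * (j₂ : ℤ) := by
      rw [hcastn, hcastj]; ring
    linarith [key1, key2, e1]
  rcases eq_or_ne j s with hjs | hjs
  · rw [hjs] at main
    rw [← hcs] at main
    linarith
  · have hms := hslope j hjn hjs hfjne
    have hms' : m s < m j := by
      rw [hm j, hm s]
      have hd1 : (0 : ℚ) < (n : ℚ) - (j : ℚ) := by
        have : (j : ℚ) < (n : ℚ) := by exact_mod_cast hjn
        linarith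
      have hd2 : (0 : ℚ) < (n : ℚ) - (s : ℚ) := by
        have : (s : ℚ) < (n : ℚ) := by exact_mod_cast hs
        linarith
      rw [div_lt_div_iff₀ hd2 hd1]
      have mainZ : cs * ((n : ℤ) - (j : ℤ)) <
          (v (f.coeff n) - v (f.coeff j)) * ((n : ℤ) - (s : ℤ)) := by linarith [main]
      have main' : ((cs : ℚ)) * ((n : ℚ) - (j : ℚ)) <
          (((v (f.coeff n) - v (f.coeff j)) : ℤ) : ℚ) * ((n : ℚ) - (s : ℚ)) := by
        exact_mod_cast mainZ
      rw [hcs] at main'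
      push_cast at main' ⊢
      linarith
    linarith
end
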